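/- Let U be a finite set, S ⊆ U^T nonempty, and p_t* the maximum entropy feedback. For any trajectory u ∈ U^T: u ∈ S if and only if ∏_{t=1}^{T} p_t*(u_t | u_{<t}) > 0, and in that case the product equals 1/|S|. -/

import Mathlib

/-!
The prefix sets `pref S u t` shrink as `t` grows, so the product of the feedback values
telescopes to `|pref S u T| / |pref S u 0|`, even past the first empty prefix set, after which
every factor is `0 / 0 = 0`. Here `pref S u 0 = S`, and `pref S u T` is `{u}` or `∅` according
as `u ∈ S` or not.
-/

open Finset

variable {T : ℕ}

def pref {U : Type*} [DecidableEq U] (S : Finset (Fin T → U)) (u : Fin T → U) (t : ℕ) :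
    Finset (Fin T → U) :=
  S.filter (fun v => ∀ i : Fin T, (i : ℕ) < t → v i = u i)

noncomputable def mef {U : Type*} [DecidableEq U] (S : Finset (Fin T → U)) (u : Fin T → U)
    (t : ℕ) : ℝ :=
  ((pref S u (t + 1)).card : ℝ) / ((pref S u t).card : ℝ)

theorem Finset.prod_range_div_of_eq_zero_imp {G : Type*} [CommGroupWithZero G] {f : ℕ → G}
    (h0 : f 0 ≠ 0) (hf : ∀ t, f t = 0 → f (t + 1) = 0) (n : ℕ) :
    ∏ t ∈ range n, f (t + 1) / f t = f n / f 0 := by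
  induction n with
  | zero => simp [h0]
  | succ n ih =>
    rw [prod_range_succ, ih]
    by_cases hn : f n = 0
    · simp [hn, hf n hn]
    · rw [mul_comm, div_mul_div_cancel₀ hn]

section Prefix

variable {U : Type*} [DecidableEq U] (S : Finset (Fin T → U)) (u : Fin T → U)

theorem pref_zero : pref S u 0 = S := by
  simp [pref]

theorem pref_succ_subset (t : ℕ) : pref S u (t + 1) ⊆ pref S u t :=
  monotone_filter_right _ fun _ _ h i hi => h i (Nat.lt_succ_of_lt hi)

theorem pref_length : pref S u T = S.filter (· = u) := by
  refine filter_congr fun v _ => ⟨fun h => funext fun i => h i i.isLt, ?_⟩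
  rintro rfl _ _
  rfl

theorem card_pref_length : (pref S u T).card = if u ∈ S then 1 else 0 := by
  rw [pref_length, filter_eq']
  split_ifs <;> simp

theorem prod_mef_eq {S : Finset (Fin T → U)} (hS : S.Nonempty) (u : Fin T → U) :
    ∏ t : Fin T, mef S u t = (if u ∈ S then 1 else 0) / (S.card : ℝ) := by
  have h0 : ((pref S u 0).card : ℝ) ≠ 0 := by
    simpa [pref_zero] using hS.ne_empty
  have hf (t : ℕ) : ((pref S u t).card : ℝ) = 0 → ((pref S u (t + 1)).card : ℝ) = 0 := by
    simpa only [Nat.cast_eq_zero, card_eq_zero] using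
      fun h => subset_empty.1 (h ▸ pref_succ_subset S u t)
  rw [Fin.prod_univ_eq_prod_range (mef S u)]
  unfold mef
  rw [prod_range_div_of_eq_zero_imp h0 hf, card_pref_length, pref_zero]
  push_cast [apply_ite]
  rfl

end Prefix

theorem mem_iff_mef_prod_pos_general (T : ℕ) (U : Type*)
    [DecidableEq U] (S : Finset (Fin T → U)) (hS : S.Nonempty) (u : Fin T → U) :
    (u ∈ S ↔ 0 < ∏ t : Fin T, mef S u (t : ℕ)) ∧
    (u ∈ S → ∏ t : Fin T, mef S u (t : ℕ) = 1 / (S.card : ℝ)) := by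
  have hcard : (0 : ℝ) < S.card := by exact_mod_cast hS.card_pos
  rw [prod_mef_eq hS]
  by_cases hu : u ∈ S <;> simp [hu, hcard]

/-- A trajectory is feasible iff the product of its feedback values is positive, in which
case the product equals 1/|S|. -/
theorem mem_iff_mef_prod_pos (T : ℕ) (hT : 0 < T) (U : Type*) [Fintype U] [Nonempty U]
    [DecidableEq U] (S : Finset (Fin T → U)) (hS : S.Nonempty) (u : Fin T → U) :
    (u ∈ S ↔ 0 < ∏ t : Fin T, mef S u (t : ℕ)) ∧
    (u ∈ S → ∏ t : Fin T, mef S u (t : ℕ) = 1 / (S.card : ℝ)) :=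
  mem_iff_mef_prod_pos_general T U S hS u
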